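/- If X is an infinite subshift and φ an endomorphism of X, then α^-(φ) ≤ α^+(φ); equivalently, W^+(n, φ) ≥ W^-(n, φ) for all n > 0. -/

import Mathlib

open Filter Topology

/-- The left shift on bi-infinite sequences. -/
def shift {A : Type*} (x : ℤ → A) : ℤ → A := fun n => x (n + 1)

/-- The shift by `k` places (`σ^k`). -/
def zshift {A : Type*} (k : ℤ) (x : ℤ → A) : ℤ → A := fun n => x (n + k)

/-- A subshift: a closed, shift-invariant subset of `Σ^ℤ`. -/
def IsSubshift {A : Type*} [TopologicalSpace A] (X : Set (ℤ → A)) : Prop :=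
  IsClosed X ∧ shift '' X = X

/-- An endomorphism of the subshift `X`: a continuous shift-commuting surjection of `X`. -/
structure IsEndo {A : Type*} [TopologicalSpace A] (X : Set (ℤ → A))
    (φ : (ℤ → A) → (ℤ → A)) : Prop where
  maps : Set.MapsTo φ X X
  surj : Set.SurjOn φ X X
  cont : ContinuousOn φ X
  comm : ∀ x ∈ X, φ (shift x) = shift (φ x)

/-- `S` φ-codes `T`: agreement of two points of `X` on `S` forces agreement of their
φ-images on `T`. -/
def Codes {A : Type*} (X : Set (ℤ → A)) (φ : (ℤ → A) → (ℤ → A)) (S T : Set ℤ) : Prop :=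
  ∀ x ∈ X, ∀ y ∈ X, (∀ i ∈ S, x i = y i) → ∀ j ∈ T, φ x j = φ y j

/-- The set of integers `W` such that `[0,∞)` φⁿ-codes `[W,∞)`; `W⁺(n,φ)` is its
least element. -/
def WplusSet {A : Type*} (X : Set (ℤ → A)) (φ : (ℤ → A) → (ℤ → A)) (n : ℕ) : Set ℤ :=
  {W | Codes X (φ^[n]) (Set.Ici 0) (Set.Ici W)}

/-- The set of integers `W` such that `(-∞,0]` φⁿ-codes `(-∞,W]`; `W⁻(n,φ)` is its
greatest element. -/
def WminusSet {A : Type*} (X : Set (ℤ → A)) (φ : (ℤ → A) → (ℤ → A)) (n : ℕ) : Set ℤ :=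
  {W | Codes X (φ^[n]) (Set.Iic 0) (Set.Iic W)}

/-- A subshift of finite type: defined by a finite set of excluded words. -/
def IsSFT {A : Type*} (X : Set (ℤ → A)) : Prop :=
  ∃ F : Set (List A), F.Finite ∧
    ∀ x : ℤ → A, x ∈ X ↔ ∀ (n : ℤ), ∀ w ∈ F, ∃ i : Fin w.length, x (n + i) ≠ w.get i

/-!
Suppose `W⁺(n, φ) < W⁻(n, φ)` and put `ψ = φⁿ`. Shifting by one, `[1, ∞)` ψ-codes
`[W⁺ + 1, ∞) ∋ W⁻`, and `(-∞, 0]` ψ-codes `W⁻` as well; by compactness both codings only use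
bounded windows `[1, a]` and `[-b, 0]`. Sliding them, the word of `x` on `[1, a + b]` determines
`ψ x` on the `a + b + 1` positions `[W⁻, W⁻ + a + b]`. As `ψ` is onto, `P_X(m + 1) ≤ P_X(m)` for
`m = a + b`, which is impossible for an infinite subshift: otherwise every word of length `m`
would extend uniquely to the left and to the right, so a point would be determined by its word
on `[0, m)`. The inequality `α⁻ ≤ α⁺` follows in the limit.
-/

theorem Set.ncard_image_le_ncard_image_of_factors {α β γ : Type*} {f : α → β} {g : α → γ}
    {s : Set α} (h : ∀ x ∈ s, ∀ y ∈ s, f x = f y → g x = g y) (hs : (f '' s).Finite) :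
    (g '' s).ncard ≤ (f '' s).ncard := by
  rcases s.eq_empty_or_nonempty with rfl | ⟨a, -⟩
  · simp
  have : Nonempty α := ⟨a⟩
  have hg : g '' s = (g ∘ Function.invFunOn f s) '' (f '' s) := by
    rw [← Set.image_comp]
    refine Set.image_congr fun x hx => (h x hx _ (Function.invFunOn_mem ⟨x, hx, rfl⟩)
      (Function.invFunOn_eq ⟨x, hx, rfl⟩).symm)
  rw [hg]
  exact Set.ncard_image_le hs

section Subshift

variable {A : Type*}

@[simp]
theorem zshift_apply (k : ℤ) (x : ℤ → A) (n : ℤ) : zshift k x n = x (n + k) := rfl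

@[simp]
theorem zshift_zero (x : ℤ → A) : zshift 0 x = x := by
  funext n; simp

theorem zshift_zshift (a b : ℤ) (x : ℤ → A) : zshift a (zshift b x) = zshift (a + b) x := by
  funext n; simp only [zshift_apply]; ring_nf

theorem shift_eq_zshift_one : (shift : (ℤ → A) → ℤ → A) = zshift 1 := rfl

variable [TopologicalSpace A] {X : Set (ℤ → A)} {φ : (ℤ → A) → (ℤ → A)}

theorem IsSubshift.shift_mem (hX : IsSubshift X) {x : ℤ → A} (hx : x ∈ X) : shift x ∈ X :=
  hX.2 ▸ Set.mem_image_of_mem _ hx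

theorem IsSubshift.zshift_mem (hX : IsSubshift X) (k : ℤ) {x : ℤ → A} (hx : x ∈ X) :
    zshift k x ∈ X := by
  induction k using Int.induction_on generalizing x with
  | zero => simpa using hx
  | succ k ih =>
    rw [← zshift_zshift, ← shift_eq_zshift_one]
    exact ih (hX.shift_mem hx)
  | pred k ih =>
    obtain ⟨y, hy, rfl⟩ : x ∈ shift '' X := hX.2.symm ▸ hx
    rw [shift_eq_zshift_one, zshift_zshift, sub_add_cancel]
    exact ih hy

theorem IsEndo.map_zshift (hX : IsSubshift X) (hφ : IsEndo X φ) (k : ℤ) {x : ℤ → A}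
    (hx : x ∈ X) : φ (zshift k x) = zshift k (φ x) := by
  induction k using Int.induction_on generalizing x with
  | zero => simp
  | succ k ih =>
    rw [← zshift_zshift, ← zshift_zshift, ← shift_eq_zshift_one, ih (hX.shift_mem hx),
      hφ.comm x hx]
  | pred k ih =>
    obtain ⟨y, hy, rfl⟩ : x ∈ shift '' X := hX.2.symm ▸ hx
    rw [hφ.comm y hy, shift_eq_zshift_one, zshift_zshift, zshift_zshift, sub_add_cancel]
    exact ih hy

theorem isEndo_id (X : Set (ℤ → A)) : IsEndo X id :=
  ⟨Set.mapsTo_id X, Set.surjOn_id X, continuousOn_id, fun _ _ => rfl⟩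

theorem IsEndo.iterate (hφ : IsEndo X φ) (n : ℕ) : IsEndo X (φ^[n]) where
  maps := hφ.maps.iterate n
  surj := hφ.surj.iterate n
  cont := hφ.cont.iterate hφ.maps n
  comm := by
    induction n with
    | zero => simp
    | succ n ih =>
      intro x hx
      rw [Function.iterate_succ_apply, Function.iterate_succ_apply, hφ.comm x hx,
        ih _ (hφ.maps hx)]

end Subshift

section Codes

open Set

variable {A : Type*} {X : Set (ℤ → A)} {φ : (ℤ → A) → (ℤ → A)}
  {S S' T T' : Set ℤ}

theorem Codes.mono (h : Codes X φ S T) (hS : S ⊆ S') (hT : T' ⊆ T) : Codes X φ S' T' :=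
  fun x hx y hy hxy j hj => h x hx y hy (fun i hi => hxy i (hS hi)) j (hT hj)

theorem codes_iff_forall_codes_singleton : Codes X φ S T ↔ ∀ j ∈ T, Codes X φ S {j} :=
  ⟨fun h _ hj => h.mono subset_rfl (singleton_subset_iff.2 hj),
    fun h x hx y hy hxy j hj => h j hj x hx y hy hxy j rfl⟩

theorem Codes.image_add_const [TopologicalSpace A] (hX : IsSubshift X) (hφ : IsEndo X φ)
    (h : Codes X φ S T) (k : ℤ) : Codes X φ ((· + k) '' S) ((· + k) '' T) := by
  rintro x hx y hy hxy _ ⟨j, hj, rfl⟩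
  have := h _ (hX.zshift_mem k hx) _ (hX.zshift_mem k hy)
    (fun i hi => hxy (i + k) (mem_image_of_mem _ hi)) j hj
  rwa [hφ.map_zshift hX k hx, hφ.map_zshift hX k hy] at this

theorem Codes.exists_inter_Icc [TopologicalSpace A] [Finite A] [DiscreteTopology A]
    (hX : IsClosed X) (hφ : ContinuousOn φ X) {j : ℤ} (h : Codes X φ S {j}) :
    ∃ n : ℕ, Codes X φ (S ∩ Icc (-n) n) {j} := by
  -- The pairs whose images differ at `j` form a compact set, covered by the open sets
  -- `{x i ≠ y i}`, `i ∈ S`.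
  set D := (X ×ˢ X) ∩ (fun p => (φ p.1 j, φ p.2 j)) ⁻¹' {q | q.1 ≠ q.2}
  have hD : IsCompact D := by
    refine (hX.isCompact.prod hX.isCompact).of_isClosed_subset ?_ inter_subset_left
    refine ContinuousOn.preimage_isClosed_of_isClosed ?_ (hX.prod hX) (isClosed_discrete _)
    exact ((continuous_apply j).comp_continuousOn (hφ.comp continuousOn_fst
      fun p hp => hp.1)).prodMk ((continuous_apply j).comp_continuousOn
      (hφ.comp continuousOn_snd fun p hp => hp.2))
  have hcover : D ⊆ ⋃ i ∈ S, {p : (ℤ → A) × (ℤ → A) | p.1 i ≠ p.2 i} := by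
    rintro ⟨x, y⟩ ⟨⟨hx, hy⟩, hne⟩
    refine mem_iUnion₂.2 (by_contra fun hc => hne (h x hx y hy (fun i hi => ?_) j rfl))
    simpa using fun hne => hc ⟨i, hi, hne⟩
  obtain ⟨F, hFS, hF, hDF⟩ := hD.elim_finite_subcover_image
    (fun i _ => isOpen_ne_fun ((continuous_apply i).comp continuous_fst)
      ((continuous_apply i).comp continuous_snd)) hcover
  obtain ⟨n, hn⟩ := (hF.image Int.natAbs).bddAbove
  refine ⟨n, fun x hx y hy hxy j' hj' => by_contra fun hne => ?_⟩
  rw [mem_singleton_iff.1 hj'] at hne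
  obtain ⟨i, hi, hxyi⟩ := mem_iUnion₂.1 (hDF (a := (x, y)) ⟨⟨hx, hy⟩, hne⟩)
  have : i.natAbs ≤ n := hn (mem_image_of_mem _ hi)
  exact hxyi (hxy i ⟨hFS hi, by omega, by omega⟩)

end Codes

section Language

open Set

variable {A : Type*}

def word (k : ℕ) (t : ℤ) (x : ℤ → A) : Fin k → A := fun i => x (t + i)

/-- `L_k(X)`, of cardinality `P_X(k)`. -/
def language (X : Set (ℤ → A)) (k : ℕ) : Set (Fin k → A) := word k 0 '' X

theorem word_eq_word_iff {k : ℕ} {t : ℤ} {x y : ℤ → A} :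
    word k t x = word k t y ↔ ∀ i ∈ Ico t (t + k), x i = y i := by
  refine ⟨fun h i ⟨hti, hik⟩ => ?_, fun h => funext fun i => h _ ⟨by omega, by omega⟩⟩
  have := congrFun h ⟨(i - t).toNat, by omega⟩
  simp only [word] at this
  rwa [Int.toNat_of_nonneg (by omega : 0 ≤ i - t), add_sub_cancel] at this

theorem tail_word (k : ℕ) (t : ℤ) (x : ℤ → A) :
    Fin.tail (word (k + 1) t x) = word k (t + 1) x := by
  funext i
  simp only [Fin.tail, word, Fin.val_succ]
  push_cast; ring_nf

variable [TopologicalSpace A] {X : Set (ℤ → A)}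

theorem IsSubshift.image_word (hX : IsSubshift X) (k : ℕ) (t : ℤ) :
    word k t '' X = language X k := by
  have h : ∀ (s : ℤ) (x : ℤ → A), word k s x = word k 0 (zshift s x) := fun s x => by
    funext i; simp only [word, zshift_apply]; ring_nf
  refine subset_antisymm ?_ ?_
  · rintro _ ⟨x, hx, rfl⟩
    exact ⟨_, hX.zshift_mem t hx, (h t x).symm⟩
  · rintro _ ⟨x, hx, rfl⟩
    refine ⟨_, hX.zshift_mem (-t) hx, ?_⟩
    rw [h, zshift_zshift, add_neg_cancel, zshift_zero]

theorem ncard_language_le_of_codes [Finite A] (hX : IsSubshift X) {φ : (ℤ → A) → (ℤ → A)}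
    (hφ : IsEndo X φ) {k l : ℕ} {s t : ℤ} (h : Codes X φ (Ico s (s + k)) (Ico t (t + l))) :
    (language X l).ncard ≤ (language X k).ncard := by
  have hl : language X l = (word l t ∘ φ) '' X := by
    rw [image_comp, hφ.surj.image_eq_of_mapsTo hφ.maps, hX.image_word]
  rw [hl, ← hX.image_word k s]
  refine ncard_image_le_ncard_image_of_factors (fun x hx y hy hxy => ?_) (toFinite _)
  exact word_eq_word_iff.2 (h x hx y hy (word_eq_word_iff.1 hxy))

theorem IsSubshift.finite_of_codes [Finite A] (hX : IsSubshift X) {k : ℕ}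
    (hR : Codes X id (Ico 0 k) {(k : ℤ)}) (hL : Codes X id (Ioc 0 k) {0}) : X.Finite := by
  have grow : ∀ n : ℕ, Codes X id (Ico 0 k) (Ico (-n) (k + n)) := by
    intro n
    induction n with
    | zero => intro x _ y _ hxy; simpa using hxy
    | succ n ih =>
      have hR' := hR.image_add_const hX (isEndo_id X) n
      have hL' := hL.image_add_const hX (isEndo_id X) (-n - 1)
      simp only [image_add_const_Ico, image_add_const_Ioc, image_singleton] at hR' hL'
      intro x hx y hy hxy j ⟨hj, hj'⟩
      have hn := ih x hx y hy hxy
      push_cast at hj hj'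
      rcases (by omega : j = -n - 1 ∨ (-n ≤ j ∧ j < k + n) ∨ j = k + n) with rfl | hj | rfl
      · exact hL' x hx y hy (fun i ⟨hi, hi'⟩ => hn i ⟨by omega, by omega⟩) _ (by simp)
      · exact hn j hj
      · exact hR' x hx y hy (fun i ⟨hi, hi'⟩ => hn i ⟨by omega, by omega⟩) _ (by simp)
  refine Finite.of_finite_image (toFinite (word k 0 '' X)) fun x hx y hy hxy => funext fun i => ?_
  exact grow (i.natAbs + 1) x hx y hy (by simpa using word_eq_word_iff.1 hxy) i
    ⟨by omega, by omega⟩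

theorem IsSubshift.ncard_language_lt_succ [Finite A] (hX : IsSubshift X) (hinf : X.Infinite)
    (k : ℕ) : (language X k).ncard < (language X (k + 1)).ncard := by
  by_contra! hle
  have hinit : Fin.init '' language X (k + 1) = language X k := by
    rw [language, image_image]; rfl
  have htail : Fin.tail '' language X (k + 1) = language X k := by
    simp only [language, image_image, tail_word, zero_add]
    exact hX.image_word k 1
  have hinj {f : (Fin (k + 1) → A) → Fin k → A} (hf : f '' language X (k + 1) = language X k) :
      InjOn f (language X (k + 1)) := by
    exact injOn_of_ncard_image_eq (le_antisymm ncard_image_le (hf ▸ hle))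
  have hR : Codes X id (Ico 0 k) {(k : ℤ)} := by
    rintro x hx y hy hxy _ rfl
    have := hinj hinit ⟨x, hx, rfl⟩ ⟨y, hy, rfl⟩ (word_eq_word_iff.2 (by simpa using hxy))
    simpa [word] using congrFun this (Fin.last k)
  have hL : Codes X id (Ioc 0 k) {0} := by
    rintro x hx y hy hxy _ rfl
    have hxy' : word k 1 x = word k 1 y :=
      word_eq_word_iff.2 fun i ⟨hi, hi'⟩ => hxy i ⟨by omega, by omega⟩
    have := hinj htail ⟨x, hx, rfl⟩ ⟨y, hy, rfl⟩ (by simpa only [tail_word, zero_add] using hxy')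
    simpa [word] using congrFun this 0
  exact hinf (hX.finite_of_codes hR hL)

end Language

section Window

open Set

variable {A : Type*} [TopologicalSpace A] {X : Set (ℤ → A)} {φ : (ℤ → A) → (ℤ → A)}

theorem IsEndo.exists_codes_longer_window [Finite A] [DiscreteTopology A] (hX : IsSubshift X)
    (hφ : IsEndo X φ) {p q : ℤ} (hP : Codes X φ (Ici 0) (Ici p))
    (hM : Codes X φ (Iic 0) (Iic q)) (hpq : p < q) :
    ∃ m : ℕ, Codes X φ (Ico 1 (1 + m)) (Ico q (q + (m + 1))) := by
  have hR : Codes X φ (Ici 1) {q} := by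
    have := hP.image_add_const hX hφ 1
    rw [image_add_const_Ici, image_add_const_Ici, zero_add] at this
    exact this.mono subset_rfl (singleton_subset_iff.2 (mem_Ici.2 (by omega)))
  have hL : Codes X φ (Iic 0) {q} := hM.mono subset_rfl (by simp)
  obtain ⟨a, ha⟩ := hR.exists_inter_Icc hX.1 hφ.cont
  obtain ⟨b, hb⟩ := hL.exists_inter_Icc hX.1 hφ.cont
  refine ⟨a + b, codes_iff_forall_codes_singleton.2 fun j ⟨hj, hj'⟩ => ?_⟩
  obtain ⟨t, rfl⟩ : ∃ t, j = q + t := ⟨j - q, by ring⟩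
  push_cast at hj'
  rcases le_or_gt t b with ht | ht
  · refine (ha.image_add_const hX hφ t).mono ?_ (by simp)
    rintro _ ⟨i, ⟨hi, -, hi'⟩, rfl⟩
    simp only [mem_Ici, mem_Ico] at hi ⊢
    omega
  · refine (hb.image_add_const hX hφ t).mono ?_ (by simp)
    rintro _ ⟨i, ⟨hi, hi', -⟩, rfl⟩
    simp only [mem_Iic, mem_Ico] at hi ⊢
    omega

end Window

/-- If `X` is infinite then `W⁻(n,φ) ≤ W⁺(n,φ)` for all `n > 0`, and hence
`α⁻(φ) ≤ α⁺(φ)`. -/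
theorem alpha_minus_le_alpha_plus {A : Type*} [Fintype A] [TopologicalSpace A]
    [DiscreteTopology A] (X : Set (ℤ → A)) (hX : IsSubshift X) (hinf : X.Infinite)
    (φ : (ℤ → A) → (ℤ → A)) (hφ : IsEndo X φ)
    (Wp Wm : ℕ → ℤ)
    (hWp : ∀ n, IsLeast (WplusSet X φ n) (Wp n))
    (hWm : ∀ n, IsGreatest (WminusSet X φ n) (Wm n))
    (αp αm : ℝ)
    (hαp : Tendsto (fun n : ℕ => (Wp n : ℝ) / n) atTop (𝓝 αp))
    (hαm : Tendsto (fun n : ℕ => (Wm n : ℝ) / n) atTop (𝓝 αm)) :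
    (∀ n : ℕ, 1 ≤ n → Wm n ≤ Wp n) ∧ αm ≤ αp := by
  have hW : ∀ n, Wm n ≤ Wp n := fun n => by
    by_contra! hlt
    obtain ⟨m, hm⟩ := (hφ.iterate n).exists_codes_longer_window hX (hWp n).1 (hWm n).1 hlt
    exact (hX.ncard_language_lt_succ hinf m).not_ge
      (ncard_language_le_of_codes hX (hφ.iterate n) hm)
  refine ⟨fun n _ => hW n, le_of_tendsto_of_tendsto' hαm hαp fun n => ?_⟩
  gcongr
  exact_mod_cast hW n
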